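/- arXiv:1903.08532 — 10 statements merged into one kernel-verified Lean document; each statement's English description precedes it below -/
import Mathlib

section
/- For a continuous map f : X → Y, the following are equivalent: (a) the image of every crowded subspace of X is crowded; (b) |f[S]| > 1 for every nonempty crowded subspace S of X; (c) every fiber f⁻¹{y} is scattered, i.e., contains no nonempty crowded subspace. -/
/-- For a continuous `f : X → Y` the following are equivalent:
(a) images of crowded subspaces are crowded;
(b) `|f[S]| > 1` for every nonempty crowded `S`;
(c) every fiber is scattered. -/
theorem stmt6 {X Y : Type*} [TopologicalSpace X] [TopologicalSpace Y]
    (f : X → Y) (hf : Continuous f) :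
    List.TFAE
      [∀ S : Set X, S.Nonempty → (∀ x ∈ S, x ∈ closure (S \ {x})) →
          ((f '' S).Nonempty ∧ ∀ y ∈ f '' S, y ∈ closure (f '' S \ {y})),
       ∀ S : Set X, S.Nonempty → (∀ x ∈ S, x ∈ closure (S \ {x})) →
          ∃ y ∈ f '' S, ∃ z ∈ f '' S, y ≠ z,
       ∀ y : Y, ∀ T ⊆ f ⁻¹' {y}, T.Nonempty → ∃ x ∈ T, x ∉ closure (T \ {x})] := by
  tfae_have 1 → 2 := by
    intro h S hne hcr
    obtain ⟨hne', hcr'⟩ := h S hne hcr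
    obtain ⟨y, hy⟩ := hne'
    obtain ⟨z, hz⟩ := closure_nonempty_iff.mp ⟨_, hcr' y hy⟩
    exact ⟨y, hy, z, hz.1, fun e => hz.2 e.symm⟩
  tfae_have 2 → 3 := by
    intro h y T hT hTne
    by_contra hc
    push_neg at hc
    obtain ⟨a, ha, b, hb, hab⟩ := h T hTne hc
    obtain ⟨xa, hxa, rfl⟩ := ha
    obtain ⟨xb, hxb, rfl⟩ := hb
    exact hab ((hT hxa).trans (hT hxb).symm)
  tfae_have 3 → 1 := by
    intro h S hne hcr
    refine ⟨hne.image f, ?_⟩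
    rintro y ⟨x, hxS, rfl⟩
    rw [mem_closure_iff]
    intro U hU hyU
    by_contra hNU
    set T : Set X := S ∩ f ⁻¹' U with hTdef
    have hTy : T ⊆ f ⁻¹' {f x} := by
      intro x' ⟨hx'S, hx'U⟩
      by_contra hne'
      exact hNU ⟨f x', hx'U, ⟨x', hx'S, rfl⟩, hne'⟩
    have hTne : T.Nonempty := ⟨x, hxS, hyU⟩
    obtain ⟨x', hx'T, hx'⟩ := h (f x) T hTy hTne
    apply hx'
    rw [mem_closure_iff]
    intro V hV hxV
    have : x' ∈ V ∩ f ⁻¹' U := ⟨hxV, hx'T.2⟩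
    have hmeet := (mem_closure_iff.mp (hcr x' hx'T.1)) (V ∩ f ⁻¹' U)
      (hV.inter (hU.preimage hf)) this
    obtain ⟨z, ⟨hzV, hzU⟩, hzS, hzx⟩ := hmeet
    exact ⟨z, hzV, ⟨⟨hzS, hzU⟩, hzx⟩⟩
  tfae_finish
end

section
/- Let X be a normal topological space, B a family of subsets of X, and A an infinite family of subsets of X that T3-splits B, meaning: for every B ∈ B there exist A₀, A₁ ∈ A with disjoint closures such that A₀ ∩ B ≠ ∅ and A₁ ∩ B ≠ ∅. Then there exists a continuous map f : X → [0,1]^κ, where κ = |A|, such that f is not constant on any member of B. -/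
/-- If `X` is normal and the infinite family `𝒜` T3-splits `ℬ`, then there is a
continuous map `f : X → [0,1]^|𝒜|` not constant on any member of `ℬ`. -/
theorem stmt7 {X : Type*} [TopologicalSpace X] [T2Space X] [NormalSpace X]
    (𝒜 ℬ : Set (Set X)) (hinf : 𝒜.Infinite)
    (hsplit : ∀ b ∈ ℬ, ∃ a₀ ∈ 𝒜, ∃ a₁ ∈ 𝒜,
      closure a₀ ∩ closure a₁ = ∅ ∧ (a₀ ∩ b).Nonempty ∧ (a₁ ∩ b).Nonempty) :
    ∃ f : X → (𝒜 → unitInterval), Continuous f ∧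
      ∀ b ∈ ℬ, ∃ x ∈ b, ∃ y ∈ b, f x ≠ f y := by
  classical
  have hI : Infinite ↥𝒜 := hinf.to_subtype
  obtain ⟨e⟩ : Nonempty (↥𝒜 ≃ ↥𝒜 × ↥𝒜) := by
    rw [← Cardinal.eq]
    simp [Cardinal.mk_prod, Cardinal.mul_eq_self (Cardinal.aleph0_le_mk ↥𝒜)]
  have hg : ∀ p : ↥𝒜 × ↥𝒜, ∃ g : C(X, ℝ),
      (∀ x, g x ∈ Set.Icc (0:ℝ) 1) ∧
      (Disjoint (closure p.1.1) (closure p.2.1) →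
        Set.EqOn g 0 (closure p.1.1) ∧ Set.EqOn g 1 (closure p.2.1)) := by
    intro p
    by_cases hd : Disjoint (closure p.1.1) (closure p.2.1)
    · obtain ⟨g, h0, h1, hm⟩ := exists_continuous_zero_one_of_isClosed
        isClosed_closure isClosed_closure hd
      exact ⟨g, hm, fun _ => ⟨h0, h1⟩⟩
    · exact ⟨ContinuousMap.const X 0, fun x => ⟨le_refl 0, zero_le_one⟩,
        fun h => absurd h hd⟩
  choose g hg1 hg2 using hg
  refine ⟨fun x a => ⟨g (e a) x, hg1 _ x⟩, ?_, ?_⟩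
  · exact continuous_pi fun a => Continuous.subtype_mk ((g (e a)).continuous) _
  · intro b hb
    obtain ⟨a₀, ha₀, a₁, ha₁, hd, ⟨x, hx0, hxb⟩, ⟨y, hy0, hyb⟩⟩ := hsplit b hb
    have hd' : Disjoint (closure a₀) (closure a₁) := Set.disjoint_iff_inter_eq_empty.mpr hd
    refine ⟨x, hxb, y, hyb, fun hxy => ?_⟩
    have h := congrFun hxy (e.symm (⟨a₀, ha₀⟩, ⟨a₁, ha₁⟩))
    simp only [Equiv.apply_symm_apply, Subtype.mk.injEq] at h
    obtain ⟨h0, h1⟩ := hg2 (⟨a₀, ha₀⟩, ⟨a₁, ha₁⟩) hd'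
    have hx' : g (⟨a₀, ha₀⟩, ⟨a₁, ha₁⟩) x = 0 := h0 (subset_closure hx0)
    have hy' : g (⟨a₀, ha₀⟩, ⟨a₁, ha₁⟩) y = 1 := h1 (subset_closure hy0)
    rw [hx', hy'] at h
    exact zero_ne_one h
end

section
/- Let X be a topological space, V a π-base for X, B a family of nonempty open subsets of X, and A a family of open subsets of X that T2-splits B (for every B ∈ B there exist disjoint A₀, A₁ ∈ A with A₀ ∩ B ≠ ∅ ≠ A₁ ∩ B). Then there is a subfamily U ⊆ V with |U| ≤ |A| · ĉ(X) that also T2-splits B, where ĉ(X) is the least cardinal κ such that there is no κ-sized pairwise disjoint family of nonempty open sets in X. -/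
open Cardinal

/-- `hatCell X` is the least cardinal `κ` such that every pairwise disjoint family of
nonempty open subsets of `X` has size `< κ`. -/
noncomputable def hatCell (X : Type*) [TopologicalSpace X] : Cardinal :=
  sInf {κ | ∀ D : Set (Set X), (∀ U ∈ D, IsOpen U ∧ U.Nonempty) →
    D.PairwiseDisjoint id → #D < κ}

lemma hatCell_spec (X : Type*) [TopologicalSpace X] :
    ∀ D : Set (Set X), (∀ U ∈ D, IsOpen U ∧ U.Nonempty) →
      D.PairwiseDisjoint id → #D < hatCell X := by
  have hne : {κ | ∀ D : Set (Set X), (∀ U ∈ D, IsOpen U ∧ U.Nonempty) →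
      D.PairwiseDisjoint id → #D < κ}.Nonempty :=
    ⟨2 ^ #(Set X), fun D _ _ => (Cardinal.mk_set_le D).trans_lt (Cardinal.cantor _)⟩
  exact csInf_mem hne

/-- From a family `𝒜` of open sets T2-splitting `ℬ` and a π-base `𝒱`, one can extract
`𝒰 ⊆ 𝒱` of size at most `|𝒜| · ĉ(X)` that still T2-splits `ℬ`. -/
theorem stmt8 {X : Type*} [TopologicalSpace X]
    (𝒱 𝒜 ℬ : Set (Set X))
    (h𝒱o : ∀ v ∈ 𝒱, IsOpen v ∧ v.Nonempty)
    (h𝒱 : ∀ G : Set X, IsOpen G → G.Nonempty → ∃ v ∈ 𝒱, v ⊆ G)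
    (h𝒜 : ∀ a ∈ 𝒜, IsOpen a)
    (hℬ : ∀ b ∈ ℬ, IsOpen b ∧ b.Nonempty)
    (hsplit : ∀ b ∈ ℬ, ∃ a₀ ∈ 𝒜, ∃ a₁ ∈ 𝒜,
      a₀ ∩ a₁ = ∅ ∧ (a₀ ∩ b).Nonempty ∧ (a₁ ∩ b).Nonempty) :
    ∃ 𝒰 ⊆ 𝒱, #𝒰 ≤ #𝒜 * hatCell X ∧
      ∀ b ∈ ℬ, ∃ u₀ ∈ 𝒰, ∃ u₁ ∈ 𝒰,
        u₀ ∩ u₁ = ∅ ∧ (u₀ ∩ b).Nonempty ∧ (u₁ ∩ b).Nonempty := by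
  classical
  -- For each set `a`, pick a maximal pairwise disjoint family of π-base elements inside `a`.
  have key : ∀ a : Set X, ∃ U : Set (Set X),
      U ⊆ 𝒱 ∧ (∀ u ∈ U, u ⊆ a) ∧ U.PairwiseDisjoint id ∧
      (IsOpen a → ∀ W : Set X, IsOpen W → (a ∩ W).Nonempty →
        ∃ u ∈ U, (u ∩ W).Nonempty) := by
    intro a
    set S : Set (Set (Set X)) :=
      {T | T ⊆ {v ∈ 𝒱 | v ⊆ a} ∧ T.PairwiseDisjoint id} with hS
    obtain ⟨U, hU⟩ : ∃ m, Maximal (· ∈ S) m := by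
      apply zorn_subset
      intro c hc hchain
      refine ⟨⋃₀ c, ⟨?_, ?_⟩, fun s hs => Set.subset_sUnion_of_mem hs⟩
      · exact Set.sUnion_subset fun t ht => (hc ht).1
      · intro u hu v hv huv
        obtain ⟨t, htc, hut⟩ := hu
        obtain ⟨t', ht'c, hvt'⟩ := hv
        rcases hchain.total htc ht'c with h | h
        · exact (hc ht'c).2 (h hut) hvt' huv
        · exact (hc htc).2 hut (h hvt') huv
    obtain ⟨⟨hU𝒱, hUdisj⟩, hUmax⟩ := hU
    refine ⟨U, fun u hu => (hU𝒱 hu).1, fun u hu => (hU𝒱 hu).2, hUdisj, ?_⟩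
    intro ha W hW hne
    by_contra hcon
    push_neg at hcon
    obtain ⟨v, hv𝒱, hvsub⟩ := h𝒱 (a ∩ W) (ha.inter hW) hne
    have hvW : v ⊆ W := hvsub.trans Set.inter_subset_right
    have hvne : v.Nonempty := (h𝒱o v hv𝒱).2
    have hvnotU : v ∉ U := by
      intro hvU
      have := hcon v hvU
      exact hvne.ne_empty (by rw [← this]; exact (Set.inter_eq_self_of_subset_left hvW).symm)
    have hins : insert v U ∈ S := by
      refine ⟨Set.insert_subset ⟨hv𝒱, hvsub.trans Set.inter_subset_left⟩ hU𝒱, ?_⟩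
      refine hUdisj.insert fun u hu hne' => ?_
      rw [Set.disjoint_iff_inter_eq_empty]
      simp only [id]
      have h1 : v ∩ u ⊆ W ∩ u := Set.inter_subset_inter_left u hvW
      rw [Set.inter_comm W u, hcon u hu] at h1
      exact Set.subset_empty_iff.mp h1
    exact hvnotU (hUmax hins (Set.subset_insert v U) (Set.mem_insert v U))
  choose F hF𝒱 hFsub hFdisj hFdense using key
  refine ⟨⋃ a ∈ 𝒜, F a, Set.iUnion₂_subset fun a _ => hF𝒱 a, ?_, ?_⟩
  · refine (Cardinal.mk_biUnion_le F 𝒜).trans ?_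
    refine mul_le_mul_right (ciSup_le' fun a => ?_) _
    exact (hatCell_spec X (F a.1) (fun u hu => h𝒱o u (hF𝒱 a.1 hu)) (hFdisj a.1)).le
  · intro b hb
    obtain ⟨a₀, ha₀, a₁, ha₁, hdisj, hb₀, hb₁⟩ := hsplit b hb
    obtain ⟨u₀, hu₀, hu₀b⟩ := hFdense a₀ (h𝒜 a₀ ha₀) b (hℬ b hb).1 hb₀
    obtain ⟨u₁, hu₁, hu₁b⟩ := hFdense a₁ (h𝒜 a₁ ha₁) b (hℬ b hb).1 hb₁
    refine ⟨u₀, Set.mem_biUnion ha₀ hu₀, u₁, Set.mem_biUnion ha₁ hu₁, ?_, hu₀b, hu₁b⟩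
    have : u₀ ∩ u₁ ⊆ a₀ ∩ a₁ :=
      Set.inter_subset_inter (hFsub a₀ u₀ hu₀) (hFsub a₁ u₁ hu₁)
    rw [hdisj] at this
    exact Set.subset_empty_iff.mp this
end

section
/- If f : X → Y is a continuous nowhere constant surjection and Y is Hausdorff with an open base B, then the family {f⁻¹(U) : U ∈ B} T2-splits the nonempty open subsets of X: for every nonempty open G ⊆ X there exist U, V ∈ B with f⁻¹(U) ∩ f⁻¹(V) = ∅, f⁻¹(U) ∩ G ≠ ∅, and f⁻¹(V) ∩ G ≠ ∅. Consequently os₂(X) ≤ w(Y), where os₂(X) is the least cardinality of a family of open sets T2-splitting all nonempty open subsets of X and w(Y) is the weight of Y. -/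
open Cardinal

/-- `𝒜` T2-splits the nonempty open subsets of `X`. -/
def T2Splits {X : Type*} [TopologicalSpace X] (𝒜 : Set (Set X)) : Prop :=
  ∀ G : Set X, IsOpen G → G.Nonempty →
    ∃ a₀ ∈ 𝒜, ∃ a₁ ∈ 𝒜, a₀ ∩ a₁ = ∅ ∧ (a₀ ∩ G).Nonempty ∧ (a₁ ∩ G).Nonempty

/-- The open T2-splitting number of `X`. -/
noncomputable def os2 (X : Type*) [TopologicalSpace X] : Cardinal :=
  sInf {κ | ∃ 𝒜 : Set (Set X), #𝒜 = κ ∧ (∀ a ∈ 𝒜, IsOpen a) ∧ T2Splits 𝒜}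

/-- The weight of `Y`: least cardinality of an open base. -/
noncomputable def weight' (Y : Type*) [TopologicalSpace Y] : Cardinal :=
  sInf {κ | ∃ ℬ : Set (Set Y), #ℬ = κ ∧ TopologicalSpace.IsTopologicalBasis ℬ}

lemma split_aux {X Y : Type u} [TopologicalSpace X] [TopologicalSpace Y] [T2Space Y]
    (f : X → Y) (hf : Continuous f)
    (hnwc : ∀ G : Set X, IsOpen G → G.Nonempty → ∃ x ∈ G, ∃ y ∈ G, f x ≠ f y)
    (ℬ : Set (Set Y)) (hB : TopologicalSpace.IsTopologicalBasis ℬ) :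
    ∀ G : Set X, IsOpen G → G.Nonempty → ∃ U ∈ ℬ, ∃ V ∈ ℬ,
      f ⁻¹' U ∩ f ⁻¹' V = ∅ ∧ (f ⁻¹' U ∩ G).Nonempty ∧ (f ⁻¹' V ∩ G).Nonempty := by
  intro G hG hGne
  obtain ⟨x, hx, y, hy, hxy⟩ := hnwc G hG hGne
  obtain ⟨U', V', hU', hV', hxU', hyV', hUV'⟩ := t2_separation hxy
  obtain ⟨U, hUB, hxU, hUsub⟩ := hB.exists_subset_of_mem_open hxU' hU'
  obtain ⟨V, hVB, hyV, hVsub⟩ := hB.exists_subset_of_mem_open hyV' hV'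
  refine ⟨U, hUB, V, hVB, ?_, ⟨x, hxU, hx⟩, ⟨y, hyV, hy⟩⟩
  have : U ∩ V = ∅ := by
    have := Set.disjoint_iff_inter_eq_empty.mp hUV'
    exact Set.eq_empty_of_subset_empty (by rw [← this]; exact Set.inter_subset_inter hUsub hVsub)
  rw [← Set.preimage_inter, this, Set.preimage_empty]

/-- If `f : X → Y` is a continuous nowhere constant surjection, `Y` Hausdorff with
base `ℬ`, then the preimages of members of `ℬ` T2-split the nonempty open subsets
of `X`; consequently `os₂(X) ≤ w(Y)`. -/
theorem stmt9 {X Y : Type u} [TopologicalSpace X] [TopologicalSpace Y] [T2Space Y]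
    (f : X → Y) (hf : Continuous f) (hsurj : Function.Surjective f)
    (hnwc : ∀ G : Set X, IsOpen G → G.Nonempty → ∃ x ∈ G, ∃ y ∈ G, f x ≠ f y)
    (ℬ : Set (Set Y)) (hB : TopologicalSpace.IsTopologicalBasis ℬ) :
    (∀ G : Set X, IsOpen G → G.Nonempty → ∃ U ∈ ℬ, ∃ V ∈ ℬ,
      f ⁻¹' U ∩ f ⁻¹' V = ∅ ∧ (f ⁻¹' U ∩ G).Nonempty ∧ (f ⁻¹' V ∩ G).Nonempty) ∧
    os2 X ≤ weight' Y := by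
  refine ⟨split_aux f hf hnwc ℬ hB, ?_⟩
  have hne : {κ | ∃ ℬ : Set (Set Y), #ℬ = κ ∧ TopologicalSpace.IsTopologicalBasis ℬ}.Nonempty :=
    ⟨#ℬ, ℬ, rfl, hB⟩
  obtain ⟨ℬ₀, hcard, hB₀⟩ := csInf_mem hne
  have hmem : #((fun U => f ⁻¹' U) '' ℬ₀) ∈
      {κ | ∃ 𝒜 : Set (Set X), #𝒜 = κ ∧ (∀ a ∈ 𝒜, IsOpen a) ∧ T2Splits 𝒜} := by
    refine ⟨_, rfl, ?_, ?_⟩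
    · rintro a ⟨U, hU, rfl⟩
      exact (hB₀.isOpen hU).preimage hf
    · intro G hG hGne
      obtain ⟨U, hUB, V, hVB, h1, h2, h3⟩ := split_aux f hf hnwc ℬ₀ hB₀ G hG hGne
      exact ⟨_, ⟨U, hUB, rfl⟩, _, ⟨V, hVB, rfl⟩, h1, h2, h3⟩
  calc os2 X ≤ #((fun U => f ⁻¹' U) '' ℬ₀) := csInf_le' hmem
    _ ≤ #ℬ₀ := Cardinal.mk_image_le
    _ = weight' Y := hcard
end

section
/- If f : X → Y is a continuous pseudo-open surjection and Y is a Hausdorff crowded space with a π-base B, then for every nonempty open G ⊆ X there exist disjoint U, V ∈ B with f⁻¹(U) ∩ G ≠ ∅ and f⁻¹(V) ∩ G ≠ ∅; hence os₂(X) ≤ π(Y). -/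
open Cardinal

/-- `ℬ` is a π-base of `Y`. -/
def IsPiBase {Y : Type*} [TopologicalSpace Y] (ℬ : Set (Set Y)) : Prop :=
  (∀ b ∈ ℬ, IsOpen b ∧ b.Nonempty) ∧
    ∀ G : Set Y, IsOpen G → G.Nonempty → ∃ b ∈ ℬ, b ⊆ G

/-- The π-weight of `Y`: least cardinality of a π-base. -/
noncomputable def piWeight (Y : Type*) [TopologicalSpace Y] : Cardinal :=
  sInf {κ | ∃ ℬ : Set (Set Y), #ℬ = κ ∧ IsPiBase ℬ}

open Set in

lemma splitLemma {X Y : Type u} [TopologicalSpace X] [TopologicalSpace Y] [T2Space Y]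
    (hY : ∀ y : Y, Filter.NeBot (nhdsWithin y {y}ᶜ))
    (f : X → Y)
    (hpo : ∀ Z : Set Y, IsNowhereDense Z → IsNowhereDense (f ⁻¹' Z))
    (ℬ : Set (Set Y)) (hB : IsPiBase ℬ) :
    ∀ G : Set X, IsOpen G → G.Nonempty → ∃ U ∈ ℬ, ∃ V ∈ ℬ,
      U ∩ V = ∅ ∧ (f ⁻¹' U ∩ G).Nonempty ∧ (f ⁻¹' V ∩ G).Nonempty := by
  intro G hG hGne
  set W := interior (closure (f '' G)) with hWdef
  have hWne : W.Nonempty := by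
    by_contra h
    have hnd : IsNowhereDense (f '' G) := not_nonempty_iff_eq_empty.mp h
    have h2 := hpo _ hnd
    have hsub : G ⊆ interior (closure (f ⁻¹' (f '' G))) :=
      interior_maximal ((subset_preimage_image f G).trans subset_closure) hG
    rw [h2] at hsub
    exact hGne.ne_empty (subset_empty_iff.mp hsub)
  obtain ⟨y, hy⟩ := hWne
  have hmem : W ∩ {y}ᶜ ∈ nhdsWithin y {y}ᶜ :=
    Filter.inter_mem (mem_nhdsWithin_of_mem_nhds (isOpen_interior.mem_nhds hy))
      self_mem_nhdsWithin
  obtain ⟨y', hy'W, hy'ne⟩ := (hY y).nonempty_of_mem hmem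
  obtain ⟨O₀, O₁, hO₀, hO₁, hyO₀, hy'O₁, hdisj⟩ := t2_separation (Ne.symm hy'ne)
  obtain ⟨U, hUB, hUsub⟩ := hB.2 (W ∩ O₀) (isOpen_interior.inter hO₀) ⟨y, hy, hyO₀⟩
  obtain ⟨V, hVB, hVsub⟩ := hB.2 (W ∩ O₁) (isOpen_interior.inter hO₁) ⟨y', hy'W, hy'O₁⟩
  refine ⟨U, hUB, V, hVB, ?_, ?_, ?_⟩
  · have : U ∩ V ⊆ O₀ ∩ O₁ := inter_subset_inter (hUsub.trans inter_subset_right)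
      (hVsub.trans inter_subset_right)
    rw [hdisj.inter_eq] at this
    exact subset_empty_iff.mp this
  all_goals {
    first
    | (obtain ⟨u, hu⟩ := (hB.1 U hUB).2
       have hucl : u ∈ closure (f '' G) := interior_subset (hUsub hu).1
       have := (mem_closure_iff.mp hucl) U (hB.1 U hUB).1 hu
       obtain ⟨w, hwU, x, hxG, rfl⟩ := this
       exact ⟨x, hwU, hxG⟩)
    | (obtain ⟨u, hu⟩ := (hB.1 V hVB).2
       have hucl : u ∈ closure (f '' G) := interior_subset (hVsub hu).1
       have := (mem_closure_iff.mp hucl) V (hB.1 V hVB).1 hu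
       obtain ⟨w, hwU, x, hxG, rfl⟩ := this
       exact ⟨x, hwU, hxG⟩)
  }

/-- If `f : X → Y` is a continuous pseudo-open surjection onto a crowded Hausdorff
space with π-base `ℬ`, then every nonempty open `G ⊆ X` is T2-split by preimages of
disjoint members of `ℬ`; hence `os₂(X) ≤ π(Y)`. -/
theorem stmt10 {X Y : Type u} [TopologicalSpace X] [TopologicalSpace Y] [T2Space Y]
    (hY : ∀ y : Y, Filter.NeBot (nhdsWithin y {y}ᶜ))
    (f : X → Y) (hf : Continuous f) (hsurj : Function.Surjective f)
    (hpo : ∀ Z : Set Y, IsNowhereDense Z → IsNowhereDense (f ⁻¹' Z))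
    (ℬ : Set (Set Y)) (hB : IsPiBase ℬ) :
    (∀ G : Set X, IsOpen G → G.Nonempty → ∃ U ∈ ℬ, ∃ V ∈ ℬ,
      U ∩ V = ∅ ∧ (f ⁻¹' U ∩ G).Nonempty ∧ (f ⁻¹' V ∩ G).Nonempty) ∧
    os2 X ≤ piWeight Y := by
  refine ⟨splitLemma hY f hpo ℬ hB, ?_⟩
  refine le_csInf ⟨#ℬ, ℬ, rfl, hB⟩ ?_
  rintro κ ⟨ℬ', rfl, hB'⟩
  have key := splitLemma hY f hpo ℬ' hB'
  have hmem : #((f ⁻¹' ·) '' ℬ') ∈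
      {κ | ∃ 𝒜 : Set (Set X), #𝒜 = κ ∧ (∀ a ∈ 𝒜, IsOpen a) ∧ T2Splits 𝒜} := by
    refine ⟨_, rfl, ?_, ?_⟩
    · rintro a ⟨b, hb, rfl⟩
      exact (hB'.1 b hb).1.preimage hf
    · intro G hG hGne
      obtain ⟨U, hU, V, hV, hdisj, h1, h2⟩ := key G hG hGne
      refine ⟨f ⁻¹' U, ⟨U, hU, rfl⟩, f ⁻¹' V, ⟨V, hV, rfl⟩, ?_, h1, h2⟩
      rw [← Set.preimage_inter, hdisj, Set.preimage_empty]
  exact (csInf_le (OrderBot.bddBelow _) hmem).trans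
    (Cardinal.mk_image_le)
end

section
/- Every regular open subset of the Cantor cube D(2)^κ = {0,1}^κ (with the product topology, each factor discrete) depends on only countably many coordinates: if R is regular open (R = int(closure R)) then there is a countable J ⊆ κ such that membership of x in R depends only on the restriction x↾J. -/
open Set Topology

namespace Stmt13Aux

variable {κ : Type*}

/-- The basic clopen box determined by a finite partial condition. -/
def box (p : Finset κ × (κ → Bool)) : Set (κ → Bool) := {x | ∀ i ∈ p.1, x i = p.2 i}

/-- Two conditions are incompatible if they disagree on a common coordinate. -/
def Incompat (p q : Finset κ × (κ → Bool)) : Prop := ∃ i, i ∈ p.1 ∧ i ∈ q.1 ∧ p.2 i ≠ q.2 i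

lemma bool_eq {a b c : Bool} (h1 : a ≠ c) (h2 : b ≠ c) : a = b := by
  cases a <;> cases b <;> cases c <;> simp_all

lemma isOpen_box (p : Finset κ × (κ → Bool)) : IsOpen (box p) := by
  have h : box p = Set.pi (↑p.1) (fun i => ({p.2 i} : Set Bool)) := by
    ext x; simp [box, Set.mem_pi]
  rw [h]
  exact isOpen_set_pi p.1.finite_toSet (fun i _ => isOpen_discrete _)

lemma exists_box_subset {U : Set (κ → Bool)} (hU : IsOpen U) {x : κ → Bool} (hx : x ∈ U) :
    ∃ p, x ∈ box p ∧ box p ⊆ U := by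
  obtain ⟨I, u, h1, h2⟩ := isOpen_pi_iff.mp hU x hx
  refine ⟨(I, x), fun i _ => rfl, fun y hy => h2 fun i hi => ?_⟩
  have := hy i hi
  rw [this]
  exact (h1 i hi).2

/-- Antichains of conditions of bounded size are countable. -/
lemma countable_antichain_of_card_le [DecidableEq κ] (n : ℕ) :
    ∀ A : Set (Finset κ × (κ → Bool)), (∀ p ∈ A, p.1.card ≤ n) →
      A.Pairwise Incompat → A.Countable := by
  induction n with
  | zero =>
    intro A hcard hA
    refine Set.Subsingleton.countable fun p hp q hq => ?_
    by_contra hne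
    obtain ⟨i, hi, _⟩ := hA hp hq hne
    have : p.1 = ∅ := Finset.card_eq_zero.mp (Nat.le_zero.mp (hcard p hp))
    simp [this] at hi
  | succ n ih =>
    intro A hcard hA
    rcases A.eq_empty_or_nonempty with rfl | ⟨p0, hp0⟩
    · exact Set.countable_empty
    have hcover : A ⊆ insert p0 (⋃ i ∈ p0.1, {q ∈ A | i ∈ q.1 ∧ q.2 i ≠ p0.2 i}) := by
      intro q hq
      by_cases hqp : q = p0
      · exact hqp ▸ Set.mem_insert _ _
      · obtain ⟨i, hi1, hi2, hne⟩ := hA hp0 hq (Ne.symm hqp)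
        refine Set.mem_insert_iff.mpr (Or.inr ?_)
        simp only [Set.mem_iUnion, Set.mem_setOf_eq]
        exact ⟨i, hi1, hq, hi2, fun h => hne h.symm⟩
    refine Set.Countable.mono hcover (Set.Countable.insert _ ?_)
    refine Set.Countable.biUnion p0.1.countable_toSet fun i _ => ?_
    set C : Set (Finset κ × (κ → Bool)) := {q ∈ A | i ∈ q.1 ∧ q.2 i ≠ p0.2 i} with hC
    set e : Finset κ × (κ → Bool) → Finset κ × (κ → Bool) := fun q => (q.1.erase i, q.2) with he
    have hinj : Set.InjOn e C := by
      rintro ⟨s, f⟩ ⟨hsA, hsi, -⟩ ⟨t, g⟩ ⟨htA, hti, -⟩ heq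
      simp only [he, Prod.mk.injEq] at heq
      have hsi' : i ∈ s := hsi
      have hti' : i ∈ t := hti
      have : s = t := by
        rw [← Finset.insert_erase hsi', ← Finset.insert_erase hti', heq.1]
      simp [this, heq.2]
    refine countable_of_injective_of_countable_image hinj (ih (e '' C) ?_ ?_)
    · rintro p ⟨⟨s, f⟩, ⟨hsA, hsi, -⟩, rfl⟩
      have hsi' : i ∈ s := hsi
      have hb : s.card ≤ n + 1 := hcard _ hsA
      simp only [he, Finset.card_erase_of_mem hsi']
      omega
    · rintro _ ⟨⟨s, f⟩, ⟨hsA, hsi, hsne⟩, rfl⟩ _ ⟨⟨t, g⟩, ⟨htA, hti, htne⟩, rfl⟩ hne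
      have hqne : (s, f) ≠ (t, g) := fun hq => hne (by rw [hq])
      obtain ⟨j, hjs, hjt, hjne⟩ := hA hsA htA hqne
      have hji : j ≠ i := by
        rintro rfl
        exact hjne (bool_eq hsne htne)
      exact ⟨j, Finset.mem_erase.mpr ⟨hji, hjs⟩,
        Finset.mem_erase.mpr ⟨hji, hjt⟩, hjne⟩

/-- Any antichain of conditions is countable (ccc of the Cantor cube). -/
lemma countable_antichain [DecidableEq κ] (A : Set (Finset κ × (κ → Bool))) (hA : A.Pairwise Incompat) :
    A.Countable := by
  have : A ⊆ ⋃ n : ℕ, {p ∈ A | p.1.card ≤ n} := by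
    intro p hp
    exact Set.mem_iUnion.mpr ⟨p.1.card, hp, le_refl _⟩
  refine Set.Countable.mono this (Set.countable_iUnion fun n => ?_)
  exact countable_antichain_of_card_le n _ (fun p hp => hp.2) (hA.mono (fun p hp => hp.1))

/-- A set depends on a set of coordinates. -/
def DepOn (S : Set (κ → Bool)) (J : Set κ) : Prop :=
  ∀ x ∈ S, ∀ y : κ → Bool, (∀ i ∈ J, y i = x i) → y ∈ S

/-- The "flip" homeomorphism of the Cantor cube. -/
def flipH (d : κ → Bool) : (κ → Bool) ≃ₜ (κ → Bool) where
  toFun z := fun i => xor (z i) (d i)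
  invFun z := fun i => xor (z i) (d i)
  left_inv z := by funext i; simp [Bool.xor_assoc]
  right_inv z := by funext i; simp [Bool.xor_assoc]
  continuous_toFun := continuous_pi fun i =>
    (continuous_of_discreteTopology (f := fun b => xor b (d i))).comp (continuous_apply i)
  continuous_invFun := continuous_pi fun i =>
    (continuous_of_discreteTopology (f := fun b => xor b (d i))).comp (continuous_apply i)

lemma flipH_image {S : Set (κ → Bool)} {J : Set κ} (h : DepOn S J) {d : κ → Bool}
    (hd : ∀ i ∈ J, d i = false) : flipH d '' S = S := by
  have key : ∀ z ∈ S, flipH d z ∈ S := by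
    intro z hz
    refine h z hz _ fun i hi => ?_
    show xor (z i) (d i) = z i
    rw [hd i hi, Bool.xor_false]
  refine Set.Subset.antisymm ?_ ?_
  · rintro _ ⟨z, hz, rfl⟩; exact key z hz
  · intro z hz
    exact ⟨flipH d z, key z hz, (flipH d).toEquiv.left_inv z⟩

lemma depOn_closure {S : Set (κ → Bool)} {J : Set κ} (h : DepOn S J) :
    DepOn (closure S) J := by
  intro x hx y hxy
  set d : κ → Bool := fun i => xor (x i) (y i) with hdd
  have hd : ∀ i ∈ J, d i = false := fun i hi => by simp [hdd, hxy i hi]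
  have hy : y = flipH d x := by
    funext i
    show y i = xor (x i) (xor (x i) (y i))
    cases x i <;> cases y i <;> rfl
  rw [hy, ← flipH_image h hd, ← (flipH d).image_closure]
  exact ⟨x, hx, rfl⟩

lemma depOn_interior {S : Set (κ → Bool)} {J : Set κ} (h : DepOn S J) :
    DepOn (interior S) J := by
  intro x hx y hxy
  set d : κ → Bool := fun i => xor (x i) (y i) with hdd
  have hd : ∀ i ∈ J, d i = false := fun i hi => by simp [hdd, hxy i hi]
  have hy : y = flipH d x := by
    funext i
    show y i = xor (x i) (xor (x i) (y i))
    cases x i <;> cases y i <;> rfl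
  have himg : flipH d '' interior S = interior S := by
    rw [(flipH d).image_interior, flipH_image h hd]
  rw [hy, ← himg]
  exact ⟨x, hx, rfl⟩

end Stmt13Aux

open Stmt13Aux in
/-- Every regular open subset of the Cantor cube `{0,1}^κ` depends on only countably
many coordinates. -/
theorem stmt13 {κ : Type*} (R : Set (κ → Bool))
    (hR : interior (closure R) = R) :
    ∃ J : Set κ, J.Countable ∧
      ∀ x ∈ R, ∀ y : κ → Bool, (∀ i ∈ J, y i = x i) → y ∈ R := by
  classical
  have hRopen : IsOpen R := hR ▸ isOpen_interior
  -- the family of antichains of conditions whose boxes lie in R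
  set 𝒮 : Set (Set (Finset κ × (κ → Bool))) :=
    {A | (∀ p ∈ A, box p ⊆ R) ∧ A.Pairwise Incompat} with h𝒮
  obtain ⟨A, hAmax⟩ := zorn_subset 𝒮 (by
    intro c hc hchain
    refine ⟨⋃₀ c, ⟨?_, ?_⟩, fun s hs => Set.subset_sUnion_of_mem hs⟩
    · rintro p ⟨a, ha, hpa⟩
      exact (hc ha).1 p hpa
    · rintro p ⟨a, ha, hpa⟩ q ⟨b, hb, hqb⟩ hne
      rcases hchain.total ha hb with hab | hba
      · exact (hc hb).2 (hab hpa) hqb hne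
      · exact (hc ha).2 hpa (hba hqb) hne)
  have hA𝒮 : A ∈ 𝒮 := hAmax.1
  set V : Set (κ → Bool) := ⋃ p ∈ A, box p with hV
  have hVR : V ⊆ R := by
    rintro x hx
    simp only [hV, Set.mem_iUnion] at hx
    obtain ⟨p, hp, hxp⟩ := hx
    exact hA𝒮.1 p hp hxp
  -- maximality: V is dense in R
  have hdense : R ⊆ closure V := by
    intro x hx
    rw [mem_closure_iff]
    intro o ho hxo
    obtain ⟨q, hxq, hqsub⟩ := exists_box_subset (ho.inter hRopen) ⟨hxo, hx⟩
    by_contra hempty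
    rw [Set.not_nonempty_iff_eq_empty] at hempty
    have hqV : box q ∩ V = ∅ := by
      apply Set.eq_empty_of_subset_empty
      rw [← hempty]
      exact Set.inter_subset_inter_left _ (fun z hz => (hqsub hz).1)
    -- q is incompatible with every member of A
    have hinc : ∀ p ∈ A, Incompat q p ∧ Incompat p q := by
      intro p hp
      have hdisj : box q ∩ box p = ∅ := by
        apply Set.eq_empty_of_subset_empty
        rw [← hqV]
        refine Set.inter_subset_inter_right _ ?_
        exact fun z hz => Set.mem_iUnion.mpr ⟨p, Set.mem_iUnion.mpr ⟨hp, hz⟩⟩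
      by_cases hcompat : ∃ i, i ∈ q.1 ∧ i ∈ p.1 ∧ q.2 i ≠ p.2 i
      · obtain ⟨i, h1, h2, hne⟩ := hcompat
        exact ⟨⟨i, h1, h2, hne⟩, ⟨i, h2, h1, fun h => hne h.symm⟩⟩
      · exfalso
        push_neg at hcompat
        have : (fun i => if i ∈ q.1 then q.2 i else p.2 i) ∈ box q ∩ box p := by
          constructor
          · intro i hi; simp [hi]
          · intro i hi
            by_cases hiq : i ∈ q.1
            · simpa [hiq] using hcompat i hiq hi
            · simp [hiq]
        rw [hdisj] at this
        exact this
    have hqA : q ∉ A := by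
      intro hqA
      have : x ∈ box q ∩ V := ⟨hxq, Set.mem_iUnion.mpr ⟨q, Set.mem_iUnion.mpr ⟨hqA, hxq⟩⟩⟩
      rw [hqV] at this
      exact this
    have hins : insert q A ∈ 𝒮 := by
      constructor
      · rintro p hp
        rcases Set.mem_insert_iff.mp hp with rfl | hp
        · exact fun z hz => (hqsub hz).2
        · exact hA𝒮.1 p hp
      · rw [Set.pairwise_insert]
        exact ⟨hA𝒮.2, fun p hp _ => ⟨(hinc p hp).1, (hinc p hp).2⟩⟩
    have := hAmax.2 hins (Set.subset_insert q A)
    exact hqA (this (Set.mem_insert q A))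
  -- closure V = closure R
  have hclV : closure V = closure R :=
    Set.Subset.antisymm (closure_mono hVR)
      (by rw [← closure_closure (s := V)]; exact closure_mono hdense)
  have hRV : R = interior (closure V) := by rw [hclV, hR]
  -- countable set of coordinates
  set J : Set κ := ⋃ p ∈ A, (↑p.1 : Set κ) with hJ
  have hJc : J.Countable :=
    Set.Countable.biUnion (countable_antichain A hA𝒮.2) fun p _ => p.1.countable_toSet
  refine ⟨J, hJc, ?_⟩
  have hVdep : DepOn V J := by
    intro x hx y hxy
    simp only [hV, Set.mem_iUnion] at hx ⊢
    obtain ⟨p, hp, hxp⟩ := hx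
    refine ⟨p, hp, fun i hi => ?_⟩
    rw [hxy i (Set.mem_iUnion.mpr ⟨p, Set.mem_iUnion.mpr ⟨hp, hi⟩⟩)]
    exact hxp i hi
  have : DepOn R J := by
    rw [hRV]
    exact depOn_interior (depOn_closure hVdep)
  exact this
end

section
/- Let Y be a CCC topological space (every pairwise disjoint family of nonempty open sets is countable) and let U be a maximal centered subfamily of the nonempty open subsets of Y (centered: every finite subfamily has nonempty intersection; maximal among such families). Then there exists a countable subfamily V ⊆ U such that ⋂V is nowhere dense in Y. -/
/-- In a CCC (crowded Hausdorff) space `Y`, every maximal centered family `𝒰` of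
nonempty open sets has a countable subfamily `𝒱` whose intersection is nowhere dense. -/
theorem stmt15 {Y : Type*} [TopologicalSpace Y] [T2Space Y]
    (hcr : ∀ y : Y, Filter.NeBot (nhdsWithin y {y}ᶜ))
    (hccc : ∀ D : Set (Set Y), (∀ V ∈ D, IsOpen V ∧ V.Nonempty) →
      D.PairwiseDisjoint id → D.Countable)
    (𝒰 : Set (Set Y))
    (h𝒰 : 𝒰 ⊆ {V : Set Y | IsOpen V ∧ V.Nonempty})
    (hcent : ∀ F : Finset (Set Y), ↑F ⊆ 𝒰 → (⋂₀ (F : Set (Set Y))).Nonempty)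
    (hmax : ∀ 𝒰' : Set (Set Y), 𝒰' ⊆ {V : Set Y | IsOpen V ∧ V.Nonempty} →
      (∀ F : Finset (Set Y), ↑F ⊆ 𝒰' → (⋂₀ (F : Set (Set Y))).Nonempty) →
      𝒰 ⊆ 𝒰' → 𝒰' = 𝒰) :
    ∃ 𝒱 ⊆ 𝒰, 𝒱.Countable ∧ IsNowhereDense (⋂₀ 𝒱) := by
  classical
  set S : Set (Set (Set Y)) :=
    {D | (∀ W ∈ D, IsOpen W ∧ W.Nonempty ∧
        ∃ F : Finset (Set Y), ↑F ⊆ 𝒰 ∧ W ∩ ⋂₀ (F : Set (Set Y)) = ∅)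
      ∧ D.PairwiseDisjoint id} with hSdef
  obtain ⟨D, hDmax⟩ : ∃ D, Maximal (· ∈ S) D := by
    apply zorn_subset
    intro c hcS hchain
    refine ⟨⋃₀ c, ⟨?_, ?_⟩, fun s hs => Set.subset_sUnion_of_mem hs⟩
    · rintro W ⟨d, hd, hW⟩
      exact (hcS hd).1 W hW
    · rintro W₁ ⟨d₁, hd₁, h₁⟩ W₂ ⟨d₂, hd₂, h₂⟩ hne
      rcases hchain.total hd₁ hd₂ with h | h
      · exact (hcS hd₂).2 (h h₁) h₂ hne
      · exact (hcS hd₁).2 h₁ (h h₂) hne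
  have hDS := hDmax.1
  have hDcnt : D.Countable :=
    hccc D (fun W hW => ⟨(hDS.1 W hW).1, (hDS.1 W hW).2.1⟩) hDS.2
  have hch : ∀ W : Set Y, ∃ F : Finset (Set Y), W ∈ D →
      ↑F ⊆ 𝒰 ∧ W ∩ ⋂₀ (F : Set (Set Y)) = ∅ := by
    intro W
    by_cases hW : W ∈ D
    · obtain ⟨F, hF1, hF2⟩ := (hDS.1 W hW).2.2
      exact ⟨F, fun _ => ⟨hF1, hF2⟩⟩
    · exact ⟨∅, fun h => absurd h hW⟩
  choose F hF using hch
  refine ⟨⋃ W ∈ D, (F W : Set (Set Y)), ?_, ?_, ?_⟩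
  · rintro V hV
    simp only [Set.mem_iUnion] at hV
    obtain ⟨W, hW, hVF⟩ := hV
    exact (hF W hW).1 hVF
  · exact Set.Countable.biUnion hDcnt fun W _ => (F W).countable_toSet
  -- nowhere dense
  have hsub : ⋂₀ (⋃ W ∈ D, (F W : Set (Set Y))) ⊆ (⋃₀ D)ᶜ := by
    intro x hx
    rintro ⟨W, hWD, hxW⟩
    have hxF : x ∈ ⋂₀ (F W : Set (Set Y)) := by
      intro V hV
      exact hx V (Set.mem_biUnion hWD hV)
    have : x ∈ W ∩ ⋂₀ (F W : Set (Set Y)) := ⟨hxW, hxF⟩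
    rw [(hF W hWD).2] at this
    exact this
  have hclosed : IsClosed ((⋃₀ D)ᶜ) :=
    (isOpen_sUnion fun W hW => (hDS.1 W hW).1).isClosed_compl
  have hint : interior ((⋃₀ D)ᶜ) = ∅ := by
    by_contra hne
    obtain ⟨x, hx⟩ := Set.nonempty_iff_ne_empty.mpr hne
    set G := interior ((⋃₀ D)ᶜ) with hGdef
    have hGopen : IsOpen G := isOpen_interior
    have hGdisj : ∀ W ∈ D, Disjoint G W := by
      intro W hW
      rw [Set.disjoint_left]
      intro a haG haW
      exact interior_subset haG ⟨W, hW, haW⟩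
    -- every nonempty open subset of G belongs to 𝒰
    have hkey : ∀ W : Set Y, IsOpen W → W.Nonempty → W ⊆ G → W ∈ 𝒰 := by
      intro W hWo hWne hWG
      -- W does not witness S-membership
      have hnot : ∀ F' : Finset (Set Y), ↑F' ⊆ 𝒰 →
          (W ∩ ⋂₀ (F' : Set (Set Y))).Nonempty := by
        intro F' hF'𝒰
        by_contra hEmp
        rw [Set.not_nonempty_iff_eq_empty] at hEmp
        have hWD : W ∉ D := by
          intro hWD
          obtain ⟨w, hw⟩ := hWne
          exact ((hGdisj W hWD).ne_of_mem (hWG hw) hw) rfl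
        have hmem : insert W D ∈ S := by
          constructor
          · rintro V hV
            rcases hV with rfl | hV
            · exact ⟨hWo, hWne, F', hF'𝒰, hEmp⟩
            · exact hDS.1 V hV
          · apply Set.pairwiseDisjoint_insert.mpr
            refine ⟨hDS.2, fun V hV _ => ?_⟩
            exact Disjoint.mono_left hWG (hGdisj V hV).symm.symm |>.symm.symm
              |> fun h => (Disjoint.mono_left hWG (hGdisj V hV))
        have := hDmax.2 hmem (Set.subset_insert W D) (Set.mem_insert W D)
        exact hWD this
      -- so 𝒰 ∪ {W} is centered, hence W ∈ 𝒰 by maximality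
      have hcent' : ∀ F' : Finset (Set Y), ↑F' ⊆ insert W 𝒰 →
          (⋂₀ (F' : Set (Set Y))).Nonempty := by
        intro F' hF'
        by_cases hWF : W ∈ F'
        · have hsubU : ↑(F'.erase W) ⊆ 𝒰 := by
            intro V hV
            simp only [Finset.coe_erase, Set.mem_diff, Set.mem_singleton_iff] at hV
            rcases hF' hV.1 with rfl | h
            · exact absurd rfl hV.2
            · exact h
          have := hnot (F'.erase W) hsubU
          have heq : (⋂₀ (F' : Set (Set Y))) =
              W ∩ ⋂₀ ((F'.erase W : Finset (Set Y)) : Set (Set Y)) := by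
            conv_lhs => rw [← Finset.insert_erase hWF]
            rw [Finset.coe_insert, Set.sInter_insert]
          rw [heq]
          exact this
        · apply hcent
          intro V hV
          rcases hF' hV with rfl | h
          · exact absurd hV hWF
          · exact h
      have hsubopen : insert W 𝒰 ⊆ {V : Set Y | IsOpen V ∧ V.Nonempty} := by
        rintro V (rfl | hV)
        · exact ⟨hWo, hWne⟩
        · exact h𝒰 hV
      have := hmax (insert W 𝒰) hsubopen hcent' (Set.subset_insert W 𝒰)
      rw [← this]
      exact Set.mem_insert W 𝒰
    -- crowdedness + Hausdorff give two disjoint nonempty open subsets of G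
    have hGnhds : G ∈ nhds x := hGopen.mem_nhds hx
    have hGm : G ∩ {x}ᶜ ∈ nhdsWithin x {x}ᶜ :=
      Filter.inter_mem (mem_nhdsWithin_of_mem_nhds hGnhds) self_mem_nhdsWithin
    obtain ⟨y, hyG, hyx⟩ := (hcr x).nonempty_of_mem hGm
    obtain ⟨V₁, V₂, hV₁o, hV₂o, hxV₁, hyV₂, hdisj⟩ :=
      t2_separation (fun h : x = y => hyx (by simp [← h]))
    have hW₁ : (G ∩ V₁) ∈ 𝒰 :=
      hkey _ (hGopen.inter hV₁o) ⟨x, hx, hxV₁⟩ Set.inter_subset_left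
    have hW₂ : (G ∩ V₂) ∈ 𝒰 :=
      hkey _ (hGopen.inter hV₂o) ⟨y, hyG, hyV₂⟩ Set.inter_subset_left
    have hsubF : ↑({G ∩ V₁, G ∩ V₂} : Finset (Set Y)) ⊆ 𝒰 := by
      intro V hV
      simp only [Finset.coe_insert, Finset.coe_singleton, Set.mem_insert_iff,
        Set.mem_singleton_iff] at hV
      rcases hV with rfl | rfl
      · exact hW₁
      · exact hW₂
    obtain ⟨z, hz⟩ := hcent _ hsubF
    simp only [Finset.coe_insert, Finset.coe_singleton, Set.sInter_insert,
      Set.sInter_singleton, Set.mem_inter_iff] at hz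
    exact (hdisj.ne_of_mem hz.1.2 hz.2.2) rfl
  -- conclude
  rw [IsNowhereDense]
  have h1 : closure (⋂₀ (⋃ W ∈ D, (F W : Set (Set Y)))) ⊆ (⋃₀ D)ᶜ :=
    closure_minimal hsub hclosed
  have h2 := interior_mono h1
  rw [hint] at h2
  exact Set.subset_eq_empty h2 rfl
end

section
/- Suppose the topological space X admits a probability measure μ defined on (at least) the Borel sets such that μ(U) > 0 for every nonempty open U and μ(G) = 1 for every dense open G. Then X has the small transversal property: for every sequence ⟨F_n⟩_{n<ω} of funnels in X (each F_n = ⟨U_{n,k}⟩_{k<ω} a decreasing sequence of open sets whose intersection is nowhere dense) there exists g : ω → ω such that ⋃_{n<ω} U_{n,g(n)} is not dense in X. -/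
/-!
A dense open set has full measure, so a nowhere dense set, lying in the complement of one, is
null. By continuity from above the sets of each funnel then have measure tending to `0`, so `g`
can be chosen with `∑ n, μ (U n (g n)) < 1`; the open union `⋃ n, U n (g n)` then has measure
`< 1` and cannot be dense.
-/

open MeasureTheory Filter

theorem IsNowhereDense.measure_eq_zero {X : Type*} [TopologicalSpace X] [MeasurableSpace X]
    [BorelSpace X] {μ : Measure X} [IsProbabilityMeasure μ]
    (hfull : ∀ G : Set X, IsOpen G → Dense G → μ G = 1) {s : Set X} (hs : IsNowhereDense s) :
    μ s = 0 := by
  obtain ⟨t, hst, htnd, htc⟩ := hs.subset_of_closed_isNowhereDense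
  obtain ⟨ho, hd⟩ := isClosed_isNowhereDense_iff_compl.mp ⟨htc, htnd⟩
  refine measure_mono_null hst ?_
  rw [← compl_compl t, prob_compl_eq_zero_iff ho.measurableSet]
  exact hfull _ ho hd

theorem exists_measure_lt_of_antitone_of_measure_iInter_eq_zero {α : Type*} [MeasurableSpace α]
    {μ : Measure α} {s : ℕ → Set α} (hs : ∀ k, NullMeasurableSet (s k) μ) (hm : Antitone s)
    (hfin : ∃ k, μ (s k) ≠ ⊤) (hnull : μ (⋂ k, s k) = 0) {ε : ENNReal} (hε : 0 < ε) :
    ∃ k, μ (s k) < ε := by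
  have htend := tendsto_measure_iInter_atTop hs hm hfin
  rw [hnull] at htend
  exact (htend.eventually_lt_const hε).exists

theorem ENNReal.exists_tsum_lt_of_forall_exists_lt {ι κ : Type*} [Countable ι]
    {a : ι → κ → ENNReal} (ha : ∀ i ε, 0 < ε → ∃ k, a i k < ε) {ε : ENNReal} (hε : ε ≠ 0) :
    ∃ g : ι → κ, ∑' i, a i (g i) < ε := by
  obtain ⟨δ, hδpos, hδ⟩ := ENNReal.exists_pos_sum_of_countable' hε ι
  choose g hg using fun i => ha i (δ i) (hδpos i)
  exact ⟨g, (ENNReal.tsum_le_tsum fun i => (hg i).le).trans_lt hδ⟩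

theorem stmt16_general {X : Type*} [TopologicalSpace X] [MeasurableSpace X] [BorelSpace X]
    (μ : Measure X) [IsProbabilityMeasure μ]
    (hfull : ∀ G : Set X, IsOpen G → Dense G → μ G = 1)
    (U : ℕ → ℕ → Set X)
    (hopen : ∀ n k, IsOpen (U n k))
    (hdec : ∀ n, Antitone (U n))
    (hnwd : ∀ n, IsNowhereDense (⋂ k, U n k)) :
    ∃ g : ℕ → ℕ, ¬ Dense (⋃ n, U n (g n)) := by
  have hsmall : ∀ n ε, 0 < ε → ∃ k, μ (U n k) < ε := fun n _ hε =>
    exists_measure_lt_of_antitone_of_measure_iInter_eq_zero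
      (fun k => (hopen n k).measurableSet.nullMeasurableSet) (hdec n)
      ⟨0, measure_ne_top μ _⟩ ((hnwd n).measure_eq_zero hfull) hε
  obtain ⟨g, hg⟩ := ENNReal.exists_tsum_lt_of_forall_exists_lt hsmall one_ne_zero
  refine ⟨g, fun hdense => ?_⟩
  have hone : μ (⋃ n, U n (g n)) = 1 := hfull _ (isOpen_iUnion fun n => hopen n (g n)) hdense
  exact ((measure_iUnion_le _).trans_lt hg).ne hone

/-- If `X` carries a Borel probability measure that is positive on nonempty open sets
and full on dense open sets, then `X` has the small transversal property. -/
theorem stmt16 {X : Type*} [TopologicalSpace X] [MeasurableSpace X] [BorelSpace X]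
    (μ : Measure X) [IsProbabilityMeasure μ]
    (hpos : ∀ U : Set X, IsOpen U → U.Nonempty → 0 < μ U)
    (hfull : ∀ G : Set X, IsOpen G → Dense G → μ G = 1)
    (U : ℕ → ℕ → Set X)
    (hopen : ∀ n k, IsOpen (U n k))
    (hdec : ∀ n, Antitone (U n))
    (hnwd : ∀ n, IsNowhereDense (⋂ k, U n k)) :
    ∃ g : ℕ → ℕ, ¬ Dense (⋃ n, U n (g n)) :=
  stmt16_general μ hfull U hopen hdec hnwd
end

section
/- If S is a splitting family for [ω]^ω (for every infinite A ⊆ ω there is S ∈ S with both A ∩ S and A \ S infinite), then the family of clopen sets {S*, ω* \ S* : S ∈ S} T3-splits the nonempty open subsets of ω* = βω \ ω; consequently os₃(ω*) ≤ 𝔰, the splitting number. -/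
open Cardinal

/-- `ω*`, the Čech–Stone remainder of `ω`, realized as the space of free (non-principal)
ultrafilters on `ℕ` with the subspace topology from `Ultrafilter ℕ ≅ βω`. -/
abbrev OmegaStar : Type := {u : Ultrafilter ℕ // ∀ n : ℕ, u ≠ pure n}

/-- For `A ⊆ ω`, the basic clopen set `A* ⊆ ω*`. -/
def ustar (A : Set ℕ) : Set OmegaStar := {u : OmegaStar | A ∈ u.1}

/-- `S` is a splitting family for `[ω]^ω`. -/
def IsSplittingFamily (S : Set (Set ℕ)) : Prop :=
  ∀ A : Set ℕ, A.Infinite → ∃ s ∈ S, (A ∩ s).Infinite ∧ (A \ s).Infinite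

/-- The splitting number `𝔰`. -/
noncomputable def fraks : Cardinal :=
  sInf {κ | ∃ S : Set (Set ℕ), #S = κ ∧ IsSplittingFamily S}

/-- `𝒜` T3-splits the nonempty open subsets of `X`. -/
def T3Splits {X : Type*} [TopologicalSpace X] (𝒜 : Set (Set X)) : Prop :=
  ∀ G : Set X, IsOpen G → G.Nonempty →
    ∃ a₀ ∈ 𝒜, ∃ a₁ ∈ 𝒜, closure a₀ ∩ closure a₁ = ∅ ∧
      (a₀ ∩ G).Nonempty ∧ (a₁ ∩ G).Nonempty

/-- The open T3-splitting number. -/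
noncomputable def os3 (X : Type*) [TopologicalSpace X] : Cardinal :=
  sInf {κ | ∃ 𝒜 : Set (Set X), #𝒜 = κ ∧ (∀ a ∈ 𝒜, IsOpen a) ∧ T3Splits 𝒜}

/-!
A nonempty open subset of `ω*` contains a basic set `A*` with `A` infinite. If `s ∈ S` splits `A`,
then `(A ∩ s)*` and `(A \ s)*` are nonempty, lie in `s*` and in its complement respectively, and
`s*` is clopen. Since no finite family splits `[ω]^ω`, the family `{s*, ω* \ s*}` has `|S|`
members, which gives `os₃(ω*) ≤ 𝔰` by taking `S` of size `𝔰`.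
-/

open Filter Set

universe u

section InfiniteSets

variable {α : Type*}

theorem Set.Infinite.exists_infinite_inter_infinite_sdiff {A : Set α} (hA : A.Infinite) :
    ∃ s : Set α, (A ∩ s).Infinite ∧ (A \ s).Infinite := by
  set f : ℕ → α := fun n => (hA.natEmbedding _ n : α)
  have hf : f.Injective := Subtype.val_injective.comp hA.natEmbedding.injective
  refine ⟨range fun n => f (2 * n), ?_, ?_⟩
  · exact infinite_of_injective_forall_mem (hf.comp fun m n h => by omega)
      fun n => ⟨(hA.natEmbedding _ _).2, n, rfl⟩
  · refine infinite_of_injective_forall_mem (f := fun n => f (2 * n + 1))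
      (hf.comp fun m n h => by omega) fun n => ⟨(hA.natEmbedding _ _).2, ?_⟩
    rintro ⟨m, hm⟩
    have := hf hm
    omega

theorem Set.Infinite.exists_infinite_subset_subset_or_subset_compl {B : Set α}
    (hB : B.Infinite) (a : Set α) : ∃ C ⊆ B, C.Infinite ∧ (C ⊆ a ∨ C ⊆ aᶜ) := by
  rw [← inter_union_sdiff B a, infinite_union] at hB
  rcases hB with h | h
  · exact ⟨B ∩ a, inter_subset_left, h, Or.inl inter_subset_right⟩
  · exact ⟨B \ a, sdiff_subset, h, Or.inr fun _ hx => hx.2⟩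

theorem Set.Finite.exists_infinite_forall_subset_or_subset_compl [Infinite α]
    {T : Set (Set α)} (hT : T.Finite) :
    ∃ B : Set α, B.Infinite ∧ ∀ s ∈ T, B ⊆ s ∨ B ⊆ sᶜ := by
  induction T, hT using Set.Finite.induction_on with
  | empty => exact ⟨univ, infinite_univ, by simp⟩
  | @insert a T _ _ ih =>
    obtain ⟨B, hB, hBT⟩ := ih
    obtain ⟨C, hCB, hC, hCa⟩ := hB.exists_infinite_subset_subset_or_subset_compl a
    refine ⟨C, hC, forall_mem_insert.2 ⟨hCa, fun s hs => ?_⟩⟩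
    exact (hBT s hs).imp hCB.trans hCB.trans

end InfiniteSets

theorem isSplittingFamily_univ : IsSplittingFamily univ :=
  fun _ hA => (hA.exists_infinite_inter_infinite_sdiff).imp fun s hs => ⟨mem_univ s, hs⟩

theorem IsSplittingFamily.infinite {S : Set (Set ℕ)} (hS : IsSplittingFamily S) :
    S.Infinite := by
  intro hfin
  obtain ⟨B, hB, hBS⟩ := hfin.exists_infinite_forall_subset_or_subset_compl
  obtain ⟨s, hs, hBs, hBs'⟩ := hS B hB
  rcases hBS s hs with h | h
  · exact hBs' (by simp [sdiff_eq_empty.2 h])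
  · exact hBs (by simp [disjoint_iff_inter_eq_empty.1 (subset_compl_iff_disjoint_right.1 h)])

theorem exists_isSplittingFamily_mk_eq_fraks :
    ∃ S : Set (Set ℕ), #S = fraks ∧ IsSplittingFamily S :=
  csInf_mem (s := {κ | ∃ S : Set (Set ℕ), #S = κ ∧ IsSplittingFamily S})
    ⟨_, univ, rfl, isSplittingFamily_univ⟩

theorem OmegaStar.le_cofinite (u : OmegaStar) : (u.1 : Filter ℕ) ≤ cofinite :=
  (u.1.le_cofinite_or_eq_pure).resolve_right fun ⟨n, hn⟩ => u.2 n hn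

theorem ustar_compl (A : Set ℕ) : ustar Aᶜ = (ustar A)ᶜ := by
  ext u
  exact Ultrafilter.compl_mem_iff_notMem

theorem isOpen_ustar (A : Set ℕ) : IsOpen (ustar A) :=
  (ultrafilter_isOpen_basic A).preimage continuous_subtype_val

theorem isClosed_ustar (A : Set ℕ) : IsClosed (ustar A) := by
  rw [← isOpen_compl_iff, ← ustar_compl]
  exact isOpen_ustar _

theorem ustar_nonempty_iff {A : Set ℕ} : (ustar A).Nonempty ↔ A.Infinite := by
  constructor
  · rintro ⟨u, hu⟩ hfin
    exact Ultrafilter.compl_mem_iff_notMem.1 (u.le_cofinite hfin.compl_mem_cofinite) hu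
  · intro hA
    have := cofinite_inf_principal_neBot_iff.2 hA
    set v := Ultrafilter.of (cofinite ⊓ 𝓟 A)
    have hv : (v : Filter ℕ) ≤ cofinite ⊓ 𝓟 A := Ultrafilter.of_le _
    refine ⟨⟨v, fun n hn => ?_⟩, le_principal_iff.1 (hv.trans inf_le_right)⟩
    have hn' : {n}ᶜ ∈ v := hv.trans inf_le_left (finite_singleton n).compl_mem_cofinite
    exact Ultrafilter.compl_mem_iff_notMem.1 hn' (hn ▸ rfl)

theorem exists_ustar_subset_of_isOpen {G : Set OmegaStar} (hG : IsOpen G) {u : OmegaStar}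
    (hu : u ∈ G) : ∃ A : Set ℕ, u ∈ ustar A ∧ ustar A ⊆ G := by
  obtain ⟨U, hU, rfl⟩ := isOpen_induced_iff.1 hG
  obtain ⟨_, ⟨A, rfl⟩, huA, hAU⟩ := ultrafilterBasis_is_basis.exists_subset_of_mem_open hu hU
  exact ⟨A, huA, fun v hv => hAU hv⟩

theorem IsSplittingFamily.t3Splits {S : Set (Set ℕ)} (hS : IsSplittingFamily S) :
    T3Splits ({A : Set OmegaStar | ∃ s ∈ S, A = ustar s} ∪
      {A : Set OmegaStar | ∃ s ∈ S, A = (ustar s)ᶜ}) := by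
  rintro G hG ⟨u, hu⟩
  obtain ⟨A, huA, hAG⟩ := exists_ustar_subset_of_isOpen hG hu
  obtain ⟨s, hs, hAs, hAs'⟩ := hS A (ustar_nonempty_iff.1 ⟨u, huA⟩)
  obtain ⟨v₀, hv₀⟩ := ustar_nonempty_iff.2 hAs
  obtain ⟨v₁, hv₁⟩ := ustar_nonempty_iff.2 hAs'
  refine ⟨ustar s, Or.inl ⟨s, hs, rfl⟩, (ustar s)ᶜ, Or.inr ⟨s, hs, rfl⟩, ?_,
    ⟨v₀, mem_of_superset hv₀ inter_subset_right, hAG (mem_of_superset hv₀ inter_subset_left)⟩,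
    ⟨v₁, ?_, hAG (mem_of_superset hv₁ sdiff_subset)⟩⟩
  · rw [(isClosed_ustar s).closure_eq, ← ustar_compl, (isClosed_ustar _).closure_eq,
      ustar_compl, inter_compl_self]
  · rw [← ustar_compl]
    exact mem_of_superset hv₁ fun _ hx => hx.2

theorem mk_setOf_exists_mem_eq_le {β γ : Type u} (f : β → γ) (S : Set β) :
    #{c | ∃ b ∈ S, c = f b} ≤ #S := by
  simpa only [image, eq_comm] using mk_image_le (f := f) (s := S)

theorem os3_omegaStar_le_mk {S : Set (Set ℕ)} (hS : IsSplittingFamily S) :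
    os3 OmegaStar ≤ #S := by
  set 𝒜 : Set (Set OmegaStar) := {A | ∃ s ∈ S, A = ustar s} ∪ {A | ∃ s ∈ S, A = (ustar s)ᶜ}
  have h𝒜 : os3 OmegaStar ≤ #𝒜 := by
    refine csInf_le' ⟨𝒜, rfl, ?_, hS.t3Splits⟩
    rintro a (⟨s, -, rfl⟩ | ⟨s, -, rfl⟩)
    exacts [isOpen_ustar s, (isClosed_ustar s).isOpen_compl]
  calc os3 OmegaStar ≤ #𝒜 := h𝒜
    _ ≤ #S + #S := (mk_union_le _ _).trans (add_le_add
          (mk_setOf_exists_mem_eq_le _ _) (mk_setOf_exists_mem_eq_le (fun s => (ustar s)ᶜ) _))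
    _ = #S := add_eq_self (aleph0_le_mk_iff.2 hS.infinite.to_subtype)

/-- If `S` splits `[ω]^ω`, then `{s*, ω* \ s* : s ∈ S}` T3-splits the nonempty open
subsets of `ω*`; consequently `os₃(ω*) ≤ 𝔰`. -/
theorem stmt17 (S : Set (Set ℕ)) (hS : IsSplittingFamily S) :
    T3Splits ({A : Set OmegaStar | ∃ s ∈ S, A = ustar s} ∪
      {A : Set OmegaStar | ∃ s ∈ S, A = (ustar s)ᶜ}) ∧
    os3 OmegaStar ≤ fraks := by
  obtain ⟨S₀, hS₀card, hS₀⟩ := exists_isSplittingFamily_mk_eq_fraks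
  exact ⟨hS.t3Splits, hS₀card ▸ os3_omegaStar_le_mk hS₀⟩
end

section
/- For every nonempty crowded Hausdorff space X, the open T2-splitting number satisfies os₂(X) ≤ sh(X) · log(c(X)), where sh(X) is the shattering number, c(X) the cellularity, and log κ = min{λ : 2^λ ≥ κ}. Concretely: given a shattering family {S_α : α < sh(X)} (each S_α a disjoint family of nonempty regular open sets such that every nonempty open U meets at least two members of some S_α), and for each α a family P_α of binary partitions of S_α of size log|S_α| separating the points of S_α, the family of open sets {⋃P_i : P = {P₀,P₁} ∈ ⋃_α P_α, i < 2} T2-splits the nonempty open subsets of X. -/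
open Cardinal

/-- A shattering family for `X`: a collection of pairwise disjoint families of nonempty
regular open sets such that every nonempty open set meets at least two members of some
family in the collection. -/
def IsShatteringFamily {X : Type*} [TopologicalSpace X] (𝔉 : Set (Set (Set X))) : Prop :=
  (∀ 𝒮 ∈ 𝔉, (∀ s ∈ 𝒮, interior (closure s) = s ∧ s.Nonempty) ∧ 𝒮.PairwiseDisjoint id) ∧
    ∀ U : Set X, IsOpen U → U.Nonempty →
      ∃ 𝒮 ∈ 𝔉, ∃ a ∈ 𝒮, ∃ b ∈ 𝒮, a ≠ b ∧ (U ∩ a).Nonempty ∧ (U ∩ b).Nonempty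

/-- The shattering number of `X`. -/
noncomputable def sh (X : Type*) [TopologicalSpace X] : Cardinal :=
  sInf {κ | ∃ 𝔉 : Set (Set (Set X)), #𝔉 = κ ∧ IsShatteringFamily 𝔉}

/-- The cellularity of `X`: supremum of cardinalities of pairwise disjoint families
of nonempty open sets. -/
noncomputable def cel (X : Type*) [TopologicalSpace X] : Cardinal :=
  sSup {κ | ∃ D : Set (Set X), #D = κ ∧ (∀ U ∈ D, IsOpen U ∧ U.Nonempty) ∧
    D.PairwiseDisjoint id}

/-- `log κ = min {λ : 2^λ ≥ κ}`. -/
noncomputable def clog (κ : Cardinal.{u}) : Cardinal.{u} :=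
  sInf {l | κ ≤ 2 ^ l}


section Aux
open Set
variable {X : Type*} [TopologicalSpace X] [T2Space X]

omit [T2Space X] in
lemma intcl_disj {V W : Set X} (hW : IsOpen W) (h : Disjoint V W) :
    Disjoint (interior (closure V)) (interior (closure W)) := by
  have h1 : Disjoint (closure V) W := h.closure_left hW
  have h2 : Disjoint (interior (closure V)) W := h1.mono_left interior_subset
  have h3 : Disjoint (interior (closure V)) (closure W) :=
    (h2.symm.closure_left isOpen_interior).symm
  exact h3.mono_right interior_subset

omit [T2Space X] in
lemma self_sub_intcl {V : Set X} (hV : IsOpen V) : V ⊆ interior (closure V) :=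
  interior_maximal subset_closure hV

omit [T2Space X] in
lemma intcl_reg {V : Set X} (hV : IsOpen V) :
    interior (closure (interior (closure V))) = interior (closure V) := by
  have h : closure (interior (closure V)) = closure V :=
    subset_antisymm (closure_minimal interior_subset isClosed_closure)
      (closure_mono (self_sub_intcl hV))
  rw [h]

lemma split_open (hX : ∀ x : X, Filter.NeBot (nhdsWithin x {x}ᶜ)) {U : Set X} (hU : IsOpen U)
    (hne : U.Nonempty) : ∃ V W : Set X, IsOpen V ∧ IsOpen W ∧ V.Nonempty ∧ W.Nonempty ∧
      V ⊆ U ∧ W ⊆ U ∧ Disjoint V W := by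
  obtain ⟨x, hx⟩ := hne
  haveI := hX x
  have hmem : U ∩ {x}ᶜ ∈ nhdsWithin x {x}ᶜ :=
    Filter.inter_mem (mem_nhdsWithin_of_mem_nhds (hU.mem_nhds hx)) self_mem_nhdsWithin
  obtain ⟨y, hyU, hyx⟩ := Filter.nonempty_of_mem hmem
  obtain ⟨V', W', hV', hW', hxV, hyW, hd⟩ := t2_separation (Ne.symm hyx)
  exact ⟨V' ∩ U, W' ∩ U, hV'.inter hU, hW'.inter hU, ⟨x, hxV, hx⟩, ⟨y, hyW, hyU⟩,
    inter_subset_right, inter_subset_right, hd.mono inter_subset_left inter_subset_left⟩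

omit [T2Space X] in
lemma cel_mem_le {D : Set (Set X)} (h1 : ∀ U ∈ D, IsOpen U ∧ U.Nonempty)
    (h2 : D.PairwiseDisjoint id) : #D ≤ cel X :=
  le_csSup ⟨#(Set X), fun _ ⟨E, hE, _⟩ => hE ▸ mk_set_le E⟩ ⟨D, rfl, h1, h2⟩

lemma many_disj (hX : ∀ x : X, Filter.NeBot (nhdsWithin x {x}ᶜ)) :
    ∀ n : ℕ, ∀ U : Set X, IsOpen U → U.Nonempty →
    ∃ D : Finset (Set X), D.card = n ∧ (∀ s ∈ D, IsOpen s ∧ s.Nonempty ∧ s ⊆ U) ∧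
      (D : Set (Set X)).PairwiseDisjoint id := by
  intro n
  induction n with
  | zero => exact fun U _ _ => ⟨∅, rfl, by simp, by simp⟩
  | succ n ih =>
    intro U hU hne
    obtain ⟨V, W, hV, hW, hVne, hWne, hVU, hWU, hd⟩ := split_open hX hU hne
    obtain ⟨D, hcard, hmem, hdisj⟩ := ih V hV hVne
    classical
    have hWD : W ∉ D := fun h =>
      hWne.ne_empty (hd.symm.eq_bot_of_le (hmem W h).2.2)
    refine ⟨insert W D, by rw [Finset.card_insert_of_notMem hWD, hcard], ?_, ?_⟩
    · intro s hs
      rcases Finset.mem_insert.mp hs with h | h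
      · exact h ▸ ⟨hW, hWne, hWU⟩
      · exact ⟨(hmem s h).1, (hmem s h).2.1, (hmem s h).2.2.trans (hVU.trans (subset_refl U))⟩
    · rw [Finset.coe_insert]
      exact hdisj.insert (fun s hs _ => hd.symm.mono_right (hmem s hs).2.2)

lemma aleph0_le_cel [Nonempty X] (hX : ∀ x : X, Filter.NeBot (nhdsWithin x {x}ᶜ)) :
    Cardinal.aleph0 ≤ cel X := by
  rw [Cardinal.aleph0_le]
  intro n
  obtain ⟨D, hcard, hmem, hdisj⟩ := many_disj hX n Set.univ isOpen_univ univ_nonempty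
  have h := cel_mem_le (D := ↑D) (fun U hU => ⟨(hmem U hU).1, (hmem U hU).2.1⟩) hdisj
  rwa [Finset.coe_sort_coe, Cardinal.mk_coe_finset, hcard] at h

lemma cel_le_pow (X : Type*) [TopologicalSpace X] : cel X ≤ 2 ^ clog (cel X) := by
  have h : clog (cel X) ∈ {l | cel X ≤ 2 ^ l} := csInf_mem ⟨cel X, (Cardinal.cantor _).le⟩
  exact h

omit [T2Space X] in
lemma aleph0_le_clog (h : Cardinal.aleph0 ≤ cel X) : Cardinal.aleph0 ≤ clog (cel X) := by
  by_contra hlt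
  exact absurd (h.trans (cel_le_pow X))
    (not_le.mpr (Cardinal.power_lt_aleph0 (by exact_mod_cast Cardinal.nat_lt_aleph0 2)
      (not_le.mp hlt)))

lemma shattering_exists (hX : ∀ x : X, Filter.NeBot (nhdsWithin x {x}ᶜ)) :
    ∃ 𝔉 : Set (Set (Set X)), IsShatteringFamily 𝔉 := by
  refine ⟨{𝒮 | ∃ V W : Set X, IsOpen V ∧ IsOpen W ∧ V.Nonempty ∧ W.Nonempty ∧ Disjoint V W ∧
    𝒮 = {interior (closure V), interior (closure W)}}, ?_, ?_⟩
  · rintro 𝒮 ⟨V, W, hV, hW, hVne, hWne, hd, rfl⟩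
    constructor
    · rintro s hs
      rcases hs with rfl | rfl
      · exact ⟨intcl_reg hV, hVne.mono (self_sub_intcl hV)⟩
      · exact ⟨intcl_reg hW, hWne.mono (self_sub_intcl hW)⟩
    · intro a ha b hb hab
      rcases ha with rfl | rfl <;> rcases hb with rfl | rfl
      · exact absurd rfl hab
      · exact intcl_disj hW hd
      · exact (intcl_disj hW hd).symm
      · exact absurd rfl hab
  · intro U hU hUne
    obtain ⟨V, W, hV, hW, hVne, hWne, hVU, hWU, hd⟩ := split_open hX hU hUne
    have hne : interior (closure V) ≠ interior (closure W) := by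
      intro h
      have hdd := (intcl_disj hW hd)
      rw [h] at hdd
      exact (hWne.mono (self_sub_intcl hW)).ne_empty (disjoint_self.mp hdd)
    exact ⟨_, ⟨V, W, hV, hW, hVne, hWne, hd, rfl⟩, interior (closure V), Or.inl rfl,
      interior (closure W), Or.inr rfl, hne,
      hVne.mono (subset_inter hVU (self_sub_intcl hV)),
      hWne.mono (subset_inter hWU (self_sub_intcl hW))⟩

end Aux

/-- For every nonempty crowded Hausdorff space `X`,
`os₂(X) ≤ sh(X) · log(c(X))`. -/
theorem stmt19 {X : Type*} [TopologicalSpace X] [T2Space X] [Nonempty X]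
    (hX : ∀ x : X, Filter.NeBot (nhdsWithin x {x}ᶜ)) :
    os2 X ≤ sh X * clog (cel X) := by
  classical
  -- a shattering family realizing sh X
  have hshne : {κ | ∃ 𝔉 : Set (Set (Set X)), #𝔉 = κ ∧ IsShatteringFamily 𝔉}.Nonempty := by
    obtain ⟨𝔉, h𝔉⟩ := shattering_exists hX
    exact ⟨#𝔉, 𝔉, rfl, h𝔉⟩
  obtain ⟨𝔉, h𝔉card, h𝔉⟩ := csInf_mem hshne
  have hκ : Cardinal.aleph0 ≤ clog (cel X) := aleph0_le_clog (aleph0_le_cel hX)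
  set κ := clog (cel X) with hκdef
  set I := κ.out with hIdef
  -- each member of each 𝒮 ∈ 𝔉 is open
  have hopen : ∀ 𝒮 ∈ 𝔉, ∀ s ∈ 𝒮, IsOpen s ∧ s.Nonempty := by
    intro 𝒮 h𝒮 s hs
    obtain ⟨heq, hne⟩ := (h𝔉.1 𝒮 h𝒮).1 s hs
    exact ⟨heq ▸ isOpen_interior, hne⟩
  -- embeddings into I → Bool
  have hemb : ∀ 𝒮 : 𝔉, Nonempty ((𝒮 : Set (Set X)) ↪ (I → Bool)) := by
    intro 𝒮
    rw [← Cardinal.le_def]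
    have h1 : #(𝒮 : Set (Set X)) ≤ cel X :=
      cel_mem_le (fun s hs => hopen 𝒮 𝒮.2 s hs) (h𝔉.1 𝒮 𝒮.2).2
    have h2 : cel X ≤ 2 ^ κ := cel_le_pow X
    have h3 : #(I → Bool) = (2 : Cardinal) ^ κ := by
      simp [Cardinal.mk_arrow, hIdef, Cardinal.mk_out]
    exact h3 ▸ (h1.trans h2)
  let F : ∀ 𝒮 : 𝔉, ↥(𝒮 : Set (Set X)) → I → Bool := fun 𝒮 => ⇑(hemb 𝒮).some
  have hFinj : ∀ 𝒮 : 𝔉, Function.Injective (F 𝒮) := fun 𝒮 => (hemb 𝒮).some.injective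
  let g : 𝔉 × I × Bool → Set X := fun p =>
    ⋃ s : (p.1 : Set (Set X)), if F p.1 s p.2.1 = p.2.2 then (s : Set X) else ∅
  have hg : ∀ (𝒯 : 𝔉) (i : I) (b : Bool) (x : X),
      x ∈ g (𝒯, i, b) ↔ ∃ s : (𝒯 : Set (Set X)), F 𝒯 s i = b ∧ x ∈ (s : Set X) := by
    intro 𝒯 i b x
    simp only [g, Set.mem_iUnion]
    constructor
    · rintro ⟨s, hs⟩
      by_cases h : F 𝒯 s i = b
      · exact ⟨s, h, by rwa [if_pos h] at hs⟩
      · rw [if_neg h] at hs; exact absurd hs (Set.notMem_empty x)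
    · rintro ⟨s, h1, h2⟩
      exact ⟨s, by rwa [if_pos h1]⟩
  set 𝒜 := Set.range g with h𝒜
  -- 𝒜 is open
  have h𝒜open : ∀ a ∈ 𝒜, IsOpen a := by
    rintro a ⟨p, rfl⟩
    refine isOpen_iUnion fun s => ?_
    split_ifs
    · exact (hopen p.1 p.1.2 s s.2).1
    · exact isOpen_empty
  -- 𝒜 T2-splits
  have hsplit : T2Splits 𝒜 := by
    intro G hG hGne
    obtain ⟨𝒮, h𝒮, a, ha, b, hb, hab, hGa, hGb⟩ := h𝔉.2 G hG hGne
    set sa : (𝒮 : Set (Set X)) := ⟨a, ha⟩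
    set sb : (𝒮 : Set (Set X)) := ⟨b, hb⟩
    have hsab : sa ≠ sb := fun h => hab (congrArg Subtype.val h)
    have : F ⟨𝒮, h𝒮⟩ sa ≠ F ⟨𝒮, h𝒮⟩ sb := fun h => hsab (hFinj ⟨𝒮, h𝒮⟩ h)
    obtain ⟨i, hi⟩ := Function.ne_iff.mp this
    refine ⟨g (⟨𝒮, h𝒮⟩, i, F ⟨𝒮, h𝒮⟩ sa i), ⟨_, rfl⟩, g (⟨𝒮, h𝒮⟩, i, F ⟨𝒮, h𝒮⟩ sb i), ⟨_, rfl⟩,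
      ?_, ?_, ?_⟩
    · apply Set.eq_empty_iff_forall_notMem.mpr
      rintro x ⟨hx0, hx1⟩
      obtain ⟨s, hs1, hs2⟩ := (hg _ _ _ x).mp hx0
      obtain ⟨t, ht1, ht2⟩ := (hg _ _ _ x).mp hx1
      have hst : s ≠ t := fun h => hi (by rw [← hs1, ← ht1, h])
      have : (s : Set X) ≠ (t : Set X) := fun h => hst (Subtype.ext h)
      exact ((h𝔉.1 𝒮 h𝒮).2 s.2 t.2 this).le_bot ⟨hs2, ht2⟩
    · obtain ⟨x, hxG, hxa⟩ := hGa
      exact ⟨x, (hg _ _ _ x).mpr ⟨sa, rfl, hxa⟩, hxG⟩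
    · obtain ⟨x, hxG, hxb⟩ := hGb
      exact ⟨x, (hg _ _ _ x).mpr ⟨sb, rfl, hxb⟩, hxG⟩
  -- cardinality bound
  have hcard : #𝒜 ≤ sh X * κ := by
    have h1 : #𝒜 ≤ #(𝔉 × I × Bool) := Cardinal.mk_range_le
    have h2 : #(↥𝔉 × I × Bool) = #𝔉 * (κ * 2) := by
      simp [Cardinal.mk_prod, Cardinal.mk_bool, Cardinal.lift_id, hIdef, Cardinal.mk_out]
    have h3 : κ * 2 = κ := Cardinal.mul_eq_left hκ
      ((Cardinal.nat_lt_aleph0 2).le.trans hκ |>.trans_eq' (by norm_num)) two_ne_zero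
    rw [h2, h3, h𝔉card] at h1
    exact h1
  -- conclude
  have hmem : #𝒜 ∈ {κ | ∃ 𝒜 : Set (Set X), #𝒜 = κ ∧ (∀ a ∈ 𝒜, IsOpen a) ∧ T2Splits 𝒜} :=
    ⟨𝒜, rfl, h𝒜open, hsplit⟩
  exact (csInf_le' hmem).trans hcard
end
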